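/- arXiv:1404.7303 — 4 statements merged into one kernel-verified Lean document; each statement's English description precedes it below -/
import Mathlib

section
/- Let G be a finite group, and x, y, z ∈ G with xyz = 1, ⟨x, y⟩ = G, and gcd(ord(x), ord(y)) = 1. Then the pairs (x,y), (y, y⁻¹xy) generate G × G; that is, the subgroup of G × G generated by (x, y) and (y, y⁻¹xy) is all of G × G. -/
/-! Since the orders of `x` and `y` are coprime, a suitable power of `(x, y)` is `(x, 1)`, so the
subgroup `H` generated by `(x, y)` and `(y, y⁻¹ * x * y)` contains `(x, 1)` and `(1, y)`; likewise
it contains `(y, 1)` and `(1, y⁻¹ * x * y)`. Both `{x, y}` and `{y, y⁻¹ * x * y}` generate `G`, so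
`H` contains `G × 1` and `1 × G`. -/

theorem exists_pow_eq_self_and_pow_eq_one_of_coprime {M N : Type*} [LeftCancelMonoid M]
    [LeftCancelMonoid N] {a : M} {b : N}
    (hcop : (orderOf a).Coprime (orderOf b)) : ∃ n : ℕ, a ^ n = a ∧ b ^ n = 1 := by
  obtain ⟨n, ha, hb⟩ := Nat.chineseRemainder hcop 1 0
  exact ⟨n, (pow_eq_pow_iff_modEq.mpr ha).trans (pow_one a),
    (pow_eq_pow_iff_modEq.mpr hb).trans (pow_zero b)⟩

theorem orderOf_inv_mul_mul_self {G : Type*} [Group G] (x y : G) :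
    orderOf (y⁻¹ * x * y) = orderOf x :=
  (SemiconjBy.orderOf_eq y⁻¹ (show y⁻¹ * x = y⁻¹ * x * y * y⁻¹ by group)).symm

theorem Subgroup.closure_pair_inv_mul_mul_self {G : Type*} [Group G] (x y : G) :
    closure {y, y⁻¹ * x * y} = closure {x, y} := by
  apply le_antisymm <;> rw [closure_le, Set.insert_subset_iff, Set.singleton_subset_iff]
  · have hx : x ∈ closure {x, y} := subset_closure (by simp)
    have hy : y ∈ closure {x, y} := subset_closure (by simp)
    exact ⟨hy, mul_mem (mul_mem (inv_mem hy) hx) hy⟩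
  · have hy : y ∈ closure {y, y⁻¹ * x * y} := subset_closure (by simp)
    have hc : y⁻¹ * x * y ∈ closure {y, y⁻¹ * x * y} := subset_closure (by simp)
    have hx : y * (y⁻¹ * x * y) * y⁻¹ = x := by group
    exact ⟨by simpa only [hx, SetLike.mem_coe] using mul_mem (mul_mem hy hc) (inv_mem hy), hy⟩

namespace Subgroup

variable {G K : Type*} [Group G] [Group K] {H : Subgroup (G × K)}

theorem mk_one_mem_and_one_mk_mem_of_coprime {a : G} {b : K} (hab : (a, b) ∈ H)
    (hcop : (orderOf a).Coprime (orderOf b)) : (a, 1) ∈ H ∧ (1, b) ∈ H := by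
  obtain ⟨n, ha, hb⟩ := exists_pow_eq_self_and_pow_eq_one_of_coprime hcop
  have ha1 : (a, 1) ∈ H := by simpa [ha, hb] using H.pow_mem hab n
  exact ⟨ha1, by simpa using H.mul_mem (H.inv_mem ha1) hab⟩

theorem eq_top_of_closure_eq_top_of_forall_mem {s : Set G} {t : Set K}
    (hs : closure s = ⊤) (ht : closure t = ⊤)
    (hsH : ∀ a ∈ s, (a, 1) ∈ H) (htH : ∀ b ∈ t, (1, b) ∈ H) : H = ⊤ := by
  rw [eq_top_iff, ← top_prod_top, ← hs, ← ht, prod_le_iff, MonoidHom.map_closure,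
    MonoidHom.map_closure, closure_le, closure_le]
  constructor <;> rintro _ ⟨c, hc, rfl⟩
  exacts [hsH c hc, htH c hc]

end Subgroup

theorem stmt_0_general (G : Type*) [Group G] (x y : G)
    (hgen : Subgroup.closure {x, y} = (⊤ : Subgroup G))
    (hcop : Nat.Coprime (orderOf x) (orderOf y)) :
    Subgroup.closure {((x, y) : G × G), (y, y⁻¹ * x * y)} = (⊤ : Subgroup (G × G)) := by
  set H := Subgroup.closure {((x, y) : G × G), (y, y⁻¹ * x * y)}
  obtain ⟨hx1, h1y⟩ := Subgroup.mk_one_mem_and_one_mk_mem_of_coprime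
    (H := H) (a := x) (b := y) (Subgroup.subset_closure (by simp)) hcop
  obtain ⟨hy1, h1c⟩ := Subgroup.mk_one_mem_and_one_mk_mem_of_coprime
    (H := H) (a := y) (b := y⁻¹ * x * y) (Subgroup.subset_closure (by simp))
    (by rw [orderOf_inv_mul_mul_self]; exact hcop.symm)
  refine Subgroup.eq_top_of_closure_eq_top_of_forall_mem hgen
    ((Subgroup.closure_pair_inv_mul_mul_self x y).trans hgen) ?_ ?_
  · simp only [Set.mem_insert_iff, Set.mem_singleton_iff, forall_eq_or_imp, forall_eq]
    exact ⟨hx1, hy1⟩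
  · simp only [Set.mem_insert_iff, Set.mem_singleton_iff, forall_eq_or_imp, forall_eq]
    exact ⟨h1y, h1c⟩

theorem stmt_0 (G : Type*) [Group G] [Finite G] (x y z : G)
    (hxyz : x * y * z = 1)
    (hgen : Subgroup.closure {x, y} = (⊤ : Subgroup G))
    (hcop : Nat.Coprime (orderOf x) (orderOf y)) :
    Subgroup.closure {((x, y) : G × G), (y, y⁻¹ * x * y)} = (⊤ : Subgroup (G × G)) :=
  stmt_0_general G x y hgen hcop
end

section
/- Let q = 3^(2n+1) with n ≥ 1 and n⁻ = q - 3^(n+1) + 1. Then gcd((q-1)/2, n⁻) = 1. -/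
theorem stmt_6 (n q : ℕ) (hn : 1 ≤ n) (hq : q = 3 ^ (2 * n + 1)) :
    Nat.gcd ((q - 1) / 2) (q - 3 ^ (n + 1) + 1) = 1 := by
  set a := 3 ^ (n + 1) with ha
  have haq : a * a = 3 * q := by
    rw [ha, hq, ← pow_add, ← pow_succ']
    ring_nf
  have hale : a ≤ q := by
    rw [ha, hq]
    exact Nat.pow_le_pow_right (by norm_num) (by omega)
  have ha1 : 1 ≤ a := Nat.one_le_pow _ _ (by norm_num)
  obtain ⟨c, hc⟩ : ∃ c, a = c + 1 := ⟨a - 1, by omega⟩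
  obtain ⟨b, hb⟩ : ∃ b, q = b + c + 1 := ⟨q - a, by omega⟩
  have hquad : (c + 1) * (c + 1) = 3 * (b + c + 1) := by rw [← hc, ← hb]; exact haq
  have hM : (b + 1) * (b + 2 * c + 3) = q * (q - 1) + 1 := by
    have : q - 1 = b + c := by omega
    rw [this, hb]; nlinarith [hquad]
  have hodd : 2 ∣ q - 1 := by
    have : Odd q := hq ▸ Odd.pow (by decide)
    obtain ⟨k, hk⟩ := this
    omega
  set d := Nat.gcd ((q - 1) / 2) (q - a + 1) with hd
  have hd1 : d ∣ (q - 1) / 2 := Nat.gcd_dvd_left _ _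
  have hd2 : d ∣ q - a + 1 := Nat.gcd_dvd_right _ _
  have hd1' : d ∣ q - 1 := hd1.trans (Nat.div_dvd_of_dvd hodd)
  have hb1 : q - a + 1 = b + 1 := by omega
  have hdM : d ∣ q * (q - 1) + 1 := by
    rw [← hM]
    exact Dvd.dvd.mul_right (hb1 ▸ hd2) _
  have hdq : d ∣ q * (q - 1) := hd1'.mul_left _
  have : d ∣ 1 := by
    have := Nat.dvd_sub hdM hdq
    simpa using this
  exact Nat.dvd_one.mp this
end

section
/- Let q = 2^(2n+1) with n ≥ 1 and n⁻ = q² + q + 1 - 2^(n+1)(q+1). Then gcd((q²-1)/3, n⁻) = 1. -/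
theorem stmt_9 (n q : ℕ) (hn : 1 ≤ n) (hq : q = 2 ^ (2 * n + 1)) :
    Nat.gcd ((q ^ 2 - 1) / 3) (q ^ 2 + q + 1 - 2 ^ (n + 1) * (q + 1)) = 1 := by
  set a := 2 ^ n with ha_def
  have ha : 2 ≤ a := by
    calc (2:ℕ) = 2 ^ 1 := rfl
    _ ≤ 2 ^ n := Nat.pow_le_pow_right (by norm_num) hn
  have hq' : q = 2 * a ^ 2 := by
    rw [hq, ha_def, ← pow_mul, ← pow_succ']
    congr 1
    omega
  have h2n1 : (2:ℕ) ^ (n + 1) = 2 * a := by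
    rw [ha_def, pow_succ]; ring
  have h3 : 3 ∣ q ^ 2 - 1 := by
    have hqsq : q ^ 2 = 4 ^ (2 * n + 1) := by
      rw [hq, ← pow_mul, show (4:ℕ) = 2 ^ 2 from rfl, ← pow_mul]
      ring_nf
    rw [hqsq]
    simpa using Nat.sub_dvd_pow_sub_pow 4 1 (2 * n + 1)
  have hle : 2 ^ (n + 1) * (q + 1) ≤ q ^ 2 + q + 1 := by
    rw [h2n1, hq']
    nlinarith [ha, sq_nonneg a]
  set m := (q ^ 2 - 1) / 3 with hm_def
  have hm : 3 * m = q ^ 2 - 1 := Nat.mul_div_cancel' h3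
  set N := q ^ 2 + q + 1 - 2 ^ (n + 1) * (q + 1) with hN_def
  set d := Nat.gcd m N with hd_def
  have hdm : d ∣ m := Nat.gcd_dvd_left _ _
  have hdN : d ∣ N := Nat.gcd_dvd_right _ _
  have hdq2 : d ∣ q ^ 2 - 1 := hm ▸ Dvd.dvd.mul_left hdm 3
  have hq1 : 1 ≤ q ^ 2 := Nat.one_le_pow _ _ (by rw [hq]; positivity)
  have hNz : (N : ℤ) = (q:ℤ) ^ 2 + q + 1 - 2 ^ (n + 1) * (q + 1) := by
    rw [hN_def]
    push_cast [hle]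
    ring
  have hq2z : ((q ^ 2 - 1 : ℕ) : ℤ) = (q:ℤ) ^ 2 - 1 := by
    push_cast [hq1]
    ring
  have hdq4 : d ∣ q ^ 4 := by
    have h1 : (d:ℤ) ∣ (N:ℤ) := Int.natCast_dvd_natCast.mpr hdN
    have h2 : (d:ℤ) ∣ (q:ℤ) ^ 2 - 1 := hq2z ▸ Int.natCast_dvd_natCast.mpr hdq2
    have hpow : ((2:ℤ)) ^ (n + 1) * 2 ^ (n + 1) = 2 * (q:ℤ) := by
      rw [hq]
      push_cast
      rw [← pow_add]
      ring_nf
    have key : (q:ℤ) ^ 4 =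
        ((q:ℤ) ^ 2 + q + 1 + 2 ^ (n + 1) * (q + 1)) * (N:ℤ) + ((q:ℤ) ^ 2 - 1) := by
      rw [hNz]
      linear_combination ((q:ℤ) + 1) ^ 2 * hpow
    have : (d:ℤ) ∣ (q:ℤ) ^ 4 := key ▸ dvd_add (Dvd.dvd.mul_left h1 _) h2
    exact_mod_cast this
  have hq4 : q ^ 4 = 2 ^ (8 * n + 4) := by
    rw [hq, ← pow_mul]
    ring_nf
  have hNodd : Odd N := by
    refine Nat.Odd.sub_even hle ?_ ?_
    · have hqe : Even q := ⟨a ^ 2, by rw [hq']; ring⟩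
      have : Even (q ^ 2 + q) := ⟨a ^ 2 * (q + 1), by rw [hq']; ring⟩
      exact this.add_one
    · exact ⟨2 ^ n * (q + 1), by rw [pow_succ]; ring⟩
  have hdodd : Odd d := by
    rcases Nat.even_or_odd d with he | ho
    · exfalso
      have h2N : 2 ∣ N := he.two_dvd.trans hdN
      exact (Nat.not_odd_iff_even.mpr ((even_iff_two_dvd).mpr h2N)) hNodd
    · exact ho
  have hnd2 : ¬ 2 ∣ d := by
    rw [Nat.odd_iff] at hdodd
    omega
  have hc : Nat.Coprime d (2 ^ (8 * n + 4)) :=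
    Nat.Coprime.pow_right _ (Nat.coprime_comm.mp ((Nat.Prime.coprime_iff_not_dvd Nat.prime_two).mpr hnd2))
  exact hc.eq_one_of_dvd (hq4 ▸ hdq4)
end

section
/- Let H be a finite perfect group and a₁, c₁, a₂, c₂ ∈ H with: ord(a₁) and ord(c₁) even, ⟨a₁,c₁⟩ = H, ⟨a₂,c₂⟩ = H, and ν(a₁,c₁) := ord(a₁)ord(c₁)ord(a₁c₁) coprime to ν(a₂,c₂). Then in G = (H × H) ⋊ ⟨g⟩, where g has order 4 and acts by swapping the two factors of H × H, the elements a = (a₁, a₂, g²) and c = (c₁, c₂, g²) generate the index-2 subgroup G⁰ = H × H × ⟨g²⟩. -/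
/-- The automorphism of `H × H` swapping the two factors. -/
def swapAut (H : Type*) [Group H] : MulAut (H × H) := (MulEquiv.prodComm : H × H ≃* H × H)

lemma swapAut_sq (H : Type*) [Group H] : swapAut H ^ 2 = 1 := by
  ext x <;> simp [swapAut, pow_two, MulAut.mul_apply]

lemma swapAut_pow_mod (H : Type*) [Group H] (k : ℕ) :
    swapAut H ^ k = swapAut H ^ (k % 2) := by
  conv_lhs => rw [← Nat.div_add_mod k 2]
  rw [pow_add, pow_mul, swapAut_sq, one_pow, one_mul]

/-- The action of the cyclic group of order 4 on `H × H`, where the generator acts by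
swapping the two factors (so the square of the generator acts trivially). -/
def swapAction (H : Type*) [Group H] : Multiplicative (ZMod 4) →* MulAut (H × H) where
  toFun z := swapAut H ^ (Multiplicative.toAdd z).val
  map_one' := by simp
  map_mul' a b := by
    show swapAut H ^ (Multiplicative.toAdd (a * b)).val
        = swapAut H ^ (Multiplicative.toAdd a).val * swapAut H ^ (Multiplicative.toAdd b).val
    rw [← pow_add, swapAut_pow_mod H ((Multiplicative.toAdd (a * b)).val),
      swapAut_pow_mod H ((Multiplicative.toAdd a).val + (Multiplicative.toAdd b).val)]
    congr 1
    have : Multiplicative.toAdd (a * b) = Multiplicative.toAdd a + Multiplicative.toAdd b := rfl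
    rw [this, ZMod.val_add]
    exact Nat.mod_mod_of_dvd _ (by norm_num)

/-!
Let `z = g²`, a central element of order 2, and let `ι₁, ι₂ : H →* G` embed the two factors.
Then `a = (ι₁ a₁ * z) * ι₂ a₂` with commuting factors whose orders divide `ord a₁` (this uses that
`ord a₁` is even) and `ord a₂`, which are coprime; so by the Chinese remainder theorem both factors
are powers of `a`, and likewise for `c`. Hence `⟨a, c⟩` contains `ι₂ H`, and contains `ι₁ H` up to
central factors. Commutators do not see central factors and `H` is perfect, so `⟨a, c⟩` contains
`ι₁ H`, then `z`, and therefore all of `G⁰ = (H × H) × ⟨z⟩`.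
-/

open Subgroup
open scoped commutatorElement

theorem Commute.mem_zpowers_mul_left_of_coprime {G : Type*} [Group G] {u v : G}
    (h : Commute u v) (hcop : (orderOf u).Coprime (orderOf v)) : u ∈ zpowers (u * v) := by
  obtain ⟨k, hku, hkv⟩ := Nat.chineseRemainder hcop 1 0
  have hpow : (u * v) ^ k = u := by
    rw [h.mul_pow, pow_eq_pow_iff_modEq.mpr hku, pow_one,
      orderOf_dvd_iff_pow_eq_one.mp (Nat.modEq_zero_iff_dvd.mp hkv), mul_one]
  simpa only [hpow] using npow_mem_zpowers (u * v) k

theorem Commute.mem_zpowers_mul_right_of_coprime {G : Type*} [Group G] {u v : G}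
    (h : Commute u v) (hcop : (orderOf u).Coprime (orderOf v)) : v ∈ zpowers (u * v) :=
  h.eq ▸ h.symm.mem_zpowers_mul_left_of_coprime hcop.symm

theorem commutatorElement_mul_central {G : Type*} [Group G] (a b : G) {z w : G}
    (hz : z ∈ center G) (hw : w ∈ center G) : ⁅a * z, b * w⁆ = ⁅a, b⁆ := by
  have hzc : ⁅z, b * w⁆ = 1 :=
    commutatorElement_eq_one_iff_commute.mpr (mem_center_iff.mp hz (b * w)).symm
  have haw : ⁅a, w⁆ = 1 := commutatorElement_eq_one_iff_commute.mpr (mem_center_iff.mp hw a)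
  calc ⁅a * z, b * w⁆ = ⁅a, b * w⁆ := by
        rw [commutatorElement_mul_left_eq_conj_mul, hzc, mul_one, mul_inv_cancel, one_mul]
    _ = ⁅a, b⁆ := by
        rw [commutatorElement_mul_right_eq_mul_conj, haw, mul_one, mul_inv_cancel_right]

theorem Subgroup.commutator_sup_center_le {G : Type*} [Group G] (K : Subgroup G) :
    ⁅K ⊔ center G, K ⊔ center G⁆ ≤ K := by
  rw [commutator_le]
  intro g₁ hg₁ g₂ hg₂
  obtain ⟨k₁, hk₁, w₁, hw₁, rfl⟩ := mem_sup_of_normal_right.mp hg₁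
  obtain ⟨k₂, hk₂, w₂, hw₂, rfl⟩ := mem_sup_of_normal_right.mp hg₂
  rw [commutatorElement_mul_central _ _ hw₁ hw₂, commutatorElement_def]
  exact K.mul_mem (K.mul_mem (K.mul_mem hk₁ hk₂) (K.inv_mem hk₁)) (K.inv_mem hk₂)

theorem Subgroup.mem_sup_center_of_mul_mem {G : Type*} [Group G] {K : Subgroup G} {g z : G}
    (hz : z ∈ center G) (h : g * z ∈ K) : g ∈ K ⊔ center G := by
  simpa using mul_mem_sup h (inv_mem hz)

theorem MonoidHom.range_le_of_le_sup_center {G H : Type*} [Group G] [Group H]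
    (hperf : commutator H = ⊤) (f : H →* G) {K : Subgroup G} (hf : f.range ≤ K ⊔ center G) :
    f.range ≤ K :=
  calc f.range = (commutator H).map f := by rw [hperf, MonoidHom.range_eq_map]
    _ = ⁅f.range, f.range⁆ := map_commutator_eq H f
    _ ≤ ⁅K ⊔ center G, K ⊔ center G⁆ := commutator_mono hf hf
    _ ≤ K := commutator_sup_center_le K

theorem MonoidHom.range_le_of_closure_eq_top {G H : Type*} [Group G] [Group H] (f : H →* G)
    {s : Set H} (hs : closure s = ⊤) {K : Subgroup G} (h : ∀ x ∈ s, f x ∈ K) : f.range ≤ K := by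
  rw [MonoidHom.range_eq_map, ← hs, MonoidHom.map_closure, closure_le]
  rintro _ ⟨x, hx, rfl⟩
  exact h x hx

namespace SemidirectProduct

variable {N G : Type*} [Group N] [Group G] {φ : G →* MulAut N}

theorem inr_mem_center {s : G} (hs : s ∈ center G) (hφ : φ s = 1) :
    inr s ∈ center (N ⋊[φ] G) := by
  rw [mem_center_iff] at hs ⊢
  intro x
  ext <;> simp [hφ, hs]

theorem comap_rightHom_le {K : Subgroup (N ⋊[φ] G)} {S : Subgroup G}
    (hN : (inl : N →* N ⋊[φ] G).range ≤ K) (hS : S.map inr ≤ K) : S.comap rightHom ≤ K := by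
  intro x hx
  rw [← inl_left_mul_inr_right x]
  exact K.mul_mem (hN ⟨_, rfl⟩) (hS ⟨_, hx, rfl⟩)

end SemidirectProduct

open SemidirectProduct

abbrev SwapExtension (H : Type*) [Group H] := (H × H) ⋊[swapAction H] Multiplicative (ZMod 4)

namespace SwapExtension

variable (H : Type*) [Group H]

def gSq : SwapExtension H := inr (Multiplicative.ofAdd (1 : ZMod 4) ^ 2)

def ι₁ : H →* SwapExtension H := inl.comp (MonoidHom.inl H H)

def ι₂ : H →* SwapExtension H := inl.comp (MonoidHom.inr H H)

theorem swapAction_ofAdd_one_sq : swapAction H (Multiplicative.ofAdd 1 ^ 2) = 1 :=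
  swapAut_sq H

theorem gSq_mem_center : gSq H ∈ center (SwapExtension H) :=
  inr_mem_center (by simp [mem_center_iff, mul_comm]) (swapAction_ofAdd_one_sq H)

theorem gSq_sq : gSq H ^ 2 = 1 := by
  have h4 : Multiplicative.ofAdd (1 : ZMod 4) ^ (2 * 2) = 1 := by decide
  rw [gSq, ← map_pow, ← pow_mul, h4, map_one]

variable {H}

theorem commute_ι₁_ι₂ (x y : H) : Commute (ι₁ H x) (ι₂ H y) := by
  ext <;> simp [ι₁, ι₂]

theorem mk_eq_ι₁_mul_gSq_mul_ι₂ (x y : H) :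
    (⟨(x, y), Multiplicative.ofAdd 1 ^ 2⟩ : SwapExtension H) = ι₁ H x * gSq H * ι₂ H y := by
  rw [mul_assoc, ← mem_center_iff.mp (gSq_mem_center H) (ι₂ H y), ← mul_assoc, ι₁, ι₂,
    MonoidHom.comp_apply, MonoidHom.comp_apply, ← map_mul, MonoidHom.inl_apply,
    MonoidHom.inr_apply, Prod.mk_mul_mk, mul_one, one_mul, mk_eq_inl_mul_inr, gSq]

theorem orderOf_ι₁_mul_gSq_dvd {x : H} (hx : Even (orderOf x)) :
    orderOf (ι₁ H x * gSq H) ∣ orderOf x := by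
  obtain ⟨m, hm⟩ := hx
  have hcomm : Commute (ι₁ H x) (gSq H) := mem_center_iff.mp (gSq_mem_center H) _
  refine orderOf_dvd_of_pow_eq_one ?_
  rw [hcomm.mul_pow, ← map_pow, pow_orderOf_eq_one, map_one, one_mul, hm, ← two_mul, pow_mul,
    gSq_sq, one_pow]

theorem commute_ι₁_mul_gSq_ι₂ (x y : H) : Commute (ι₁ H x * gSq H) (ι₂ H y) :=
  (commute_ι₁_ι₂ x y).mul_left (mem_center_iff.mp (gSq_mem_center H) _).symm

theorem coprime_orderOf_ι₁_mul_gSq_ι₂ {x y : H} (hx : Even (orderOf x))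
    (hxy : (orderOf x).Coprime (orderOf y)) :
    (orderOf (ι₁ H x * gSq H)).Coprime (orderOf (ι₂ H y)) :=
  .of_dvd (orderOf_ι₁_mul_gSq_dvd hx) (orderOf_map_dvd _ y) hxy

theorem ι₁_mul_gSq_mem_zpowers_mk {x y : H} (hx : Even (orderOf x))
    (hxy : (orderOf x).Coprime (orderOf y)) :
    ι₁ H x * gSq H ∈ zpowers (⟨(x, y), Multiplicative.ofAdd 1 ^ 2⟩ : SwapExtension H) :=
  mk_eq_ι₁_mul_gSq_mul_ι₂ x y ▸ (commute_ι₁_mul_gSq_ι₂ x y).mem_zpowers_mul_left_of_coprime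
    (coprime_orderOf_ι₁_mul_gSq_ι₂ hx hxy)

theorem ι₂_mem_zpowers_mk {x y : H} (hx : Even (orderOf x))
    (hxy : (orderOf x).Coprime (orderOf y)) :
    ι₂ H y ∈ zpowers (⟨(x, y), Multiplicative.ofAdd 1 ^ 2⟩ : SwapExtension H) :=
  mk_eq_ι₁_mul_gSq_mul_ι₂ x y ▸ (commute_ι₁_mul_gSq_ι₂ x y).mem_zpowers_mul_right_of_coprime
    (coprime_orderOf_ι₁_mul_gSq_ι₂ hx hxy)

theorem comap_rightHom_zpowers_le {K : Subgroup (SwapExtension H)} (h₁ : (ι₁ H).range ≤ K)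
    (h₂ : (ι₂ H).range ≤ K) (hg : gSq H ∈ K) :
    (zpowers (Multiplicative.ofAdd 1 ^ 2)).comap rightHom ≤ K := by
  refine comap_rightHom_le ?_ ?_
  · rintro _ ⟨p, rfl⟩
    rw [← Prod.fst_mul_snd p, map_mul]
    exact K.mul_mem (h₁ ⟨p.1, rfl⟩) (h₂ ⟨p.2, rfl⟩)
  · rwa [MonoidHom.map_zpowers, zpowers_le]

end SwapExtension

open SwapExtension in
theorem stmt_19_general (H : Type*) [Group H]
    (hperf : commutator H = ⊤)
    (a₁ c₁ a₂ c₂ : H)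
    (ha₁ : Even (orderOf a₁)) (hc₁ : Even (orderOf c₁))
    (hgen1 : Subgroup.closure {a₁, c₁} = (⊤ : Subgroup H))
    (hgen2 : Subgroup.closure {a₂, c₂} = (⊤ : Subgroup H))
    (hcop : Nat.Coprime (orderOf a₁ * orderOf c₁ * orderOf (a₁ * c₁))
      (orderOf a₂ * orderOf c₂ * orderOf (a₂ * c₂))) :
    let g : Multiplicative (ZMod 4) := Multiplicative.ofAdd 1
    let a : (H × H) ⋊[swapAction H] Multiplicative (ZMod 4) := ⟨(a₁, a₂), g ^ 2⟩
    let c : (H × H) ⋊[swapAction H] Multiplicative (ZMod 4) := ⟨(c₁, c₂), g ^ 2⟩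
    Subgroup.closure {a, c} =
      Subgroup.comap SemidirectProduct.rightHom (Subgroup.zpowers (g ^ 2)) := by
  intro g a c
  have hA : (orderOf a₁).Coprime (orderOf a₂) :=
    .of_dvd ((dvd_mul_right _ _).mul_right _) ((dvd_mul_right _ _).mul_right _) hcop
  have hC : (orderOf c₁).Coprime (orderOf c₂) :=
    .of_dvd ((dvd_mul_left _ _).mul_right _) ((dvd_mul_left _ _).mul_right _) hcop
  have ha : zpowers a ≤ closure {a, c} := zpowers_le.mpr (subset_closure (by simp))
  have hc : zpowers c ≤ closure {a, c} := zpowers_le.mpr (subset_closure (by simp))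
  have ha₁g : ι₁ H a₁ * gSq H ∈ closure {a, c} := ha (ι₁_mul_gSq_mem_zpowers_mk ha₁ hA)
  have hc₁g : ι₁ H c₁ * gSq H ∈ closure {a, c} := hc (ι₁_mul_gSq_mem_zpowers_mk hc₁ hC)
  have h₂ : (ι₂ H).range ≤ closure {a, c} := (ι₂ H).range_le_of_closure_eq_top hgen2 <| by
    rintro _ (rfl | rfl)
    exacts [ha (ι₂_mem_zpowers_mk ha₁ hA), hc (ι₂_mem_zpowers_mk hc₁ hC)]
  have h₁ : (ι₁ H).range ≤ closure {a, c} := (ι₁ H).range_le_of_le_sup_center hperf <|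
    (ι₁ H).range_le_of_closure_eq_top hgen1 <| by
      rintro _ (rfl | rfl)
      exacts [mem_sup_center_of_mul_mem (gSq_mem_center H) ha₁g,
        mem_sup_center_of_mul_mem (gSq_mem_center H) hc₁g]
  have hg : gSq H ∈ closure {a, c} := by simpa using mul_mem (inv_mem (h₁ ⟨a₁, rfl⟩)) ha₁g
  refine le_antisymm ((closure_le _).mpr ?_) (comap_rightHom_zpowers_le h₁ h₂ hg)
  rintro _ (rfl | rfl) <;> exact mem_comap.mpr (mem_zpowers _)

theorem stmt_19 (H : Type*) [Group H] [Finite H]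
    (hperf : commutator H = ⊤)
    (a₁ c₁ a₂ c₂ : H)
    (ha₁ : Even (orderOf a₁)) (hc₁ : Even (orderOf c₁))
    (hgen1 : Subgroup.closure {a₁, c₁} = (⊤ : Subgroup H))
    (hgen2 : Subgroup.closure {a₂, c₂} = (⊤ : Subgroup H))
    (hcop : Nat.Coprime (orderOf a₁ * orderOf c₁ * orderOf (a₁ * c₁))
      (orderOf a₂ * orderOf c₂ * orderOf (a₂ * c₂))) :
    let g : Multiplicative (ZMod 4) := Multiplicative.ofAdd 1
    let a : (H × H) ⋊[swapAction H] Multiplicative (ZMod 4) := ⟨(a₁, a₂), g ^ 2⟩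
    let c : (H × H) ⋊[swapAction H] Multiplicative (ZMod 4) := ⟨(c₁, c₂), g ^ 2⟩
    Subgroup.closure {a, c} =
      Subgroup.comap SemidirectProduct.rightHom (Subgroup.zpowers (g ^ 2)) :=
  stmt_19_general H hperf a₁ c₁ a₂ c₂ ha₁ hc₁ hgen1 hgen2 hcop
end
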